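/- arXiv:2311.00405 — 7 statements merged into one kernel-verified Lean document; each statement's English description precedes it below -/
import Mathlib

section
/- If M_f is a stable half-integral matching and one rounds it to an integral matching by, for each doctor node, keeping only the edge of positive weight that the doctor most prefers (if any), then every node of the graph gains at most one unit relative to its fractional degree: for every node v, the number of matched edges at v in the rounded matching is at most the fractional total weight at v plus 1. -/
/-!
Let doctor `d` be rounded to hospital `h` with `w d h < 1`. Stability of the edge `dh` cannot
come from `d`'s side: `d` would then be saturated and rank every positive edge at least as high
as `h`, its favourite one, so by strictness `h` would be its only positive edge and `d` would not
be saturated. Hence `d` is the least preferred positive-weight doctor of `h`, and by strictness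
there is at most one such `d`; every other doctor rounded to `h` contributes weight `1` at `h`.
A doctor keeps at most one edge.
-/

open Finset

lemma card_le_sum_add_one_of_card_filter_lt_one_le_one {ι : Type*} (s : Finset ι) (f : ι → ℚ)
    (hf : ∀ i ∈ s, 0 ≤ f i) (hsmall : {i ∈ s | f i < 1}.card ≤ 1) :
    (s.card : ℚ) ≤ ∑ i ∈ s, f i + 1 := by
  classical
  have hsplit := card_filter_add_card_filter_not (s := s) (fun i => f i < 1)
  set big := {i ∈ s | ¬ f i < 1}
  have hcard : (s.card : ℚ) ≤ big.card + 1 := by exact_mod_cast (by omega : s.card ≤ big.card + 1)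
  have hbig : (big.card : ℚ) ≤ ∑ i ∈ big, f i := by
    simpa using card_nsmul_le_sum big f 1 fun i hi => not_lt.1 (mem_filter.1 hi).2
  have hsub : ∑ i ∈ big, f i ≤ ∑ i ∈ s, f i :=
    sum_le_sum_of_subset_of_nonneg (filter_subset _ _) fun i hi _ => hf i hi
  linarith

lemma card_le_one_of_forall_le_of_injective {ι : Type*} {s : Finset ι} {r : ι → ℕ}
    (hr : Function.Injective r) (hle : ∀ i ∈ s, ∀ j ∈ s, r j ≤ r i) : s.card ≤ 1 :=
  card_le_one.2 fun a ha b hb => hr (le_antisymm (hle b hb a ha) (hle a ha b hb))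

lemma card_filter_eq_some_le_one {α : Type*} [Fintype α] [DecidableEq α] (o : Option α) :
    (univ.filter fun a => o = some a).card ≤ 1 :=
  card_le_one.2 fun _ ha _ hb =>
    Option.some_injective _ ((mem_filter.1 ha).2.symm.trans (mem_filter.1 hb).2)

lemma worst_of_best_of_lt_one {Doc Hos : Type} [Fintype Doc] [Fintype Hos]
    {acc : Doc → Hos → Prop} {q : Hos → ℚ} {w : Doc → Hos → ℚ}
    {rD : Doc → Hos → ℕ} {rH : Hos → Doc → ℕ}
    (hacc : ∀ d h, ¬ acc d h → w d h = 0) (hw : ∀ d h, 0 ≤ w d h)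
    (hstrictD : ∀ d h h', rD d h = rD d h' → h = h')
    (hstable : ∀ d h, acc d h → w d h < 1 →
        ((∑ h', w d h' = 1) ∧ ∀ h', 0 < w d h' → rD d h' ≤ rD d h) ∨
        ((∑ d', w d' h = q h) ∧ ∀ d', 0 < w d' h → rH h d' ≤ rH h d))
    {d : Doc} {h : Hos} (hbest : 0 < w d h ∧ ∀ h', 0 < w d h' → rD d h ≤ rD d h')
    (hlt : w d h < 1) :
    ∀ d', 0 < w d' h → rH h d' ≤ rH h d := by
  obtain ⟨hpos, hfav⟩ := hbest
  have hacc_dh : acc d h := by_contra fun hna => hpos.ne' (hacc d h hna)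
  rcases hstable d h hacc_dh hlt with ⟨hsat, hdomD⟩ | ⟨_, hdomH⟩
  · have hrow : ∑ h', w d h' = w d h := by
      refine sum_eq_single_of_mem h (mem_univ h) fun h' _ hne => ?_
      by_contra hne0
      have hpos' := (hw d h').lt_of_ne' hne0
      exact hne (hstrictD d h' h (le_antisymm (hdomD h' hpos') (hfav h' hpos')))
    exact absurd (hrow ▸ hsat) hlt.ne
  · exact hdomH

theorem stmt_1_general {Doc Hos : Type} [Fintype Doc] [Fintype Hos] [DecidableEq Hos]
    (acc : Doc → Hos → Prop)
    (q : Hos → ℚ)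
    (w : Doc → Hos → ℚ)
    (rD : Doc → Hos → ℕ) (rH : Hos → Doc → ℕ)
    -- weight only on acceptable pairs
    (hacc : ∀ d h, ¬ acc d h → w d h = 0)
    -- half-integral values
    (hvals : ∀ d h, w d h = 0 ∨ w d h = 1/2 ∨ w d h = 1)
    -- strict preferences
    (hstrictD : ∀ d h h', rD d h = rD d h' → h = h')
    (hstrictH : ∀ h d d', rH h d = rH h d' → d = d')
    -- stability: every acceptable edge of weight < 1 is dominated at an endpoint
    (hstable : ∀ d h, acc d h → w d h < 1 →
        ((∑ h', w d h' = 1) ∧ ∀ h', 0 < w d h' → rD d h' ≤ rD d h) ∨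
        ((∑ d', w d' h = q h) ∧ ∀ d', 0 < w d' h → rH h d' ≤ rH h d))
    -- the rounded matching: each doctor keeps its most preferred positive-weight edge
    (M : Doc → Option Hos)
    (hM : ∀ d h, M d = some h ↔ (0 < w d h ∧ ∀ h', 0 < w d h' → rD d h ≤ rD d h')) :
    (∀ h : Hos, ((Finset.univ.filter (fun d => M d = some h)).card : ℚ) ≤ (∑ d, w d h) + 1)
    ∧ (∀ d : Doc, ((Finset.univ.filter (fun h => M d = some h)).card : ℚ) ≤ (∑ h, w d h) + 1) := by
  have hw : ∀ d h, 0 ≤ w d h := fun d h => by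
    rcases hvals d h with h0 | h0 | h0 <;> rw [h0] <;> norm_num
  refine ⟨fun h => ?_, fun d => ?_⟩
  · set S := univ.filter fun d => M d = some h
    have hbest : ∀ d ∈ S, 0 < w d h ∧ ∀ h', 0 < w d h' → rD d h ≤ rD d h' :=
      fun d hd => (hM d h).1 (mem_filter.1 hd).2
    have hsmall : {d ∈ S | w d h < 1}.card ≤ 1 := by
      refine card_le_one_of_forall_le_of_injective (hstrictH h) fun d hd d' hd' => ?_
      obtain ⟨hdS, hlt⟩ := mem_filter.1 hd
      exact worst_of_best_of_lt_one hacc hw hstrictD hstable (hbest d hdS) hlt d'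
        (hbest d' (mem_filter.1 hd').1).1
    calc (S.card : ℚ) ≤ ∑ d ∈ S, w d h + 1 :=
          card_le_sum_add_one_of_card_filter_lt_one_le_one S _ (fun d _ => hw d h) hsmall
      _ ≤ ∑ d, w d h + 1 := by
          gcongr
          exacts [fun d _ _ => hw d h, subset_univ S]
  · have hsum : 0 ≤ ∑ h, w d h := sum_nonneg fun h _ => hw d h
    have hcard : ((univ.filter fun h => M d = some h).card : ℚ) ≤ 1 := by
      exact_mod_cast card_filter_eq_some_le_one (M d)
    linarith

/-- Rounding a stable half-integral matching by keeping, for each doctor,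
its most-preferred positive-weight edge, increases each node's degree by at most one
relative to its fractional total weight. -/
theorem stmt_1 {Doc Hos : Type} [Fintype Doc] [Fintype Hos] [DecidableEq Doc] [DecidableEq Hos]
    (acc : Doc → Hos → Prop)
    (q : Hos → ℚ)
    (w : Doc → Hos → ℚ)
    (rD : Doc → Hos → ℕ) (rH : Hos → Doc → ℕ)
    -- weight only on acceptable pairs
    (hacc : ∀ d h, ¬ acc d h → w d h = 0)
    -- half-integral values
    (hvals : ∀ d h, w d h = 0 ∨ w d h = 1/2 ∨ w d h = 1)
    -- doctors have capacity 1, hospitals capacity q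
    (hcapD : ∀ d, ∑ h, w d h ≤ 1)
    (hcapH : ∀ h, ∑ d, w d h ≤ q h)
    -- strict preferences
    (hstrictD : ∀ d h h', rD d h = rD d h' → h = h')
    (hstrictH : ∀ h d d', rH h d = rH h d' → d = d')
    -- stability: every acceptable edge of weight < 1 is dominated at an endpoint
    (hstable : ∀ d h, acc d h → w d h < 1 →
        ((∑ h', w d h' = 1) ∧ ∀ h', 0 < w d h' → rD d h' ≤ rD d h) ∨
        ((∑ d', w d' h = q h) ∧ ∀ d', 0 < w d' h → rH h d' ≤ rH h d))
    -- the rounded matching: each doctor keeps its most preferred positive-weight edge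
    (M : Doc → Option Hos)
    (hM : ∀ d h, M d = some h ↔ (0 < w d h ∧ ∀ h', 0 < w d h' → rD d h ≤ rD d h')) :
    (∀ h : Hos, ((Finset.univ.filter (fun d => M d = some h)).card : ℚ) ≤ (∑ d, w d h) + 1)
    ∧ (∀ d : Doc, ((Finset.univ.filter (fun h => M d = some h)).card : ℚ) ≤ (∑ h, w d h) + 1) :=
  stmt_1_general acc q w rD rH hacc hvals hstrictD hstrictH hstable M hM
end

section
/- Rounding a stable half-integral matching as above changes each hospital's load by at most one: if a hospital node h was saturated in M_f with capacity q, then the number of doctors assigned to h in the rounded matching M satisfies q-1 ≤ |M(h)| ≤ q+1. -/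
/-- If a hospital h was saturated in the stable half-integral matching
(total fractional weight equal to its capacity q, with at most two incident half-weight
edges), then after rounding (each doctor keeping its most preferred positive-weight edge),
the number of doctors assigned to h satisfies q-1 ≤ |M(h)| ≤ q+1. -/
theorem stmt_2 {Doc Hos : Type} [Fintype Doc] [Fintype Hos] [DecidableEq Doc] [DecidableEq Hos]
    (q : Hos → ℕ)
    (w : Doc → Hos → ℚ)
    (rD : Doc → Hos → ℕ)
    -- half-integral values
    (hvals : ∀ d h, w d h = 0 ∨ w d h = 1/2 ∨ w d h = 1)
    -- doctors have capacity 1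
    (hcapD : ∀ d, ∑ h, w d h ≤ 1)
    -- the rounded matching
    (M : Doc → Option Hos)
    (hM : ∀ d h, M d = some h ↔ (0 < w d h ∧ ∀ h', 0 < w d h' → rD d h ≤ rD d h'))
    (h : Hos)
    -- h saturated in the fractional matching
    (hsat : ∑ d, w d h = (q h : ℚ))
    -- at most two incident half-weight edges at h
    (hhalf : (Finset.univ.filter (fun d => w d h = 1/2)).card ≤ 2) :
    (q h : ℤ) - 1 ≤ ((Finset.univ.filter (fun d => M d = some h)).card : ℤ) ∧
    ((Finset.univ.filter (fun d => M d = some h)).card : ℤ) ≤ (q h : ℤ) + 1 := by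
  classical
  have nonneg : ∀ d h', (0:ℚ) ≤ w d h' := by
    intro d h'; rcases hvals d h' with h1|h1|h1 <;> rw [h1] <;> norm_num
  set F := Finset.univ.filter (fun d => w d h = 1) with hFdef
  set H := Finset.univ.filter (fun d => w d h = 1/2) with hHdef
  set Ms := Finset.univ.filter (fun d => M d = some h) with hMdef
  have hFH : Disjoint F H := by
    rw [Finset.disjoint_left]
    intro d hdF hdH
    simp only [hFdef, hHdef, Finset.mem_filter] at hdF hdH
    rw [hdF.2] at hdH; norm_num at hdH
  -- sum computation
  have hsum2 : (F.card : ℚ) + (H.card : ℚ)/2 = (q h : ℚ) := by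
    rw [← hsat]
    have hzero : ∀ x ∈ Finset.univ, x ∉ F ∪ H → w x h = 0 := by
      intro x _ hx
      simp only [Finset.mem_union, hFdef, hHdef, Finset.mem_filter, Finset.mem_univ,
        true_and, not_or] at hx
      rcases hvals x h with h1|h1|h1
      · exact h1
      · exact absurd h1 hx.2
      · exact absurd h1 hx.1
    rw [← Finset.sum_subset (Finset.subset_univ (F ∪ H)) hzero,
      Finset.sum_union hFH]
    have e1 : ∑ d ∈ F, w d h = F.card := by
      rw [Finset.sum_congr rfl (fun x hx => by
        simp only [hFdef, Finset.mem_filter] at hx; exact hx.2)]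
      simp
    have e2 : ∑ d ∈ H, w d h = (H.card : ℚ)/2 := by
      rw [Finset.sum_congr rfl (fun x hx => by
        simp only [hHdef, Finset.mem_filter] at hx; exact hx.2)]
      simp [div_eq_mul_inv]
    rw [e1, e2]
  -- full edges are kept
  have hFMs : F ⊆ Ms := by
    intro d hdF
    simp only [hFdef, Finset.mem_filter, Finset.mem_univ, true_and] at hdF
    simp only [hMdef, Finset.mem_filter, Finset.mem_univ, true_and]
    rw [hM]
    constructor
    · rw [hdF]; norm_num
    · intro h' hh'
      by_cases hne : h' = h
      · rw [hne]
      · exfalso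
        have hsub : ({h, h'} : Finset Hos) ⊆ Finset.univ := Finset.subset_univ _
        have := Finset.sum_le_sum_of_subset_of_nonneg hsub
          (fun x _ _ => nonneg d x)
        rw [Finset.sum_pair (fun he => hne he.symm)] at this
        have := le_trans this (hcapD d)
        rw [hdF] at this
        linarith
  -- assigned edges have positive weight
  have hMsFH : Ms ⊆ F ∪ H := by
    intro d hdM
    simp only [hMdef, Finset.mem_filter, Finset.mem_univ, true_and] at hdM
    have hpos := ((hM d h).mp hdM).1
    simp only [Finset.mem_union, hFdef, hHdef, Finset.mem_filter, Finset.mem_univ, true_and]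
    rcases hvals d h with h1|h1|h1
    · rw [h1] at hpos; norm_num at hpos
    · exact Or.inr h1
    · exact Or.inl h1
  have c1 : F.card ≤ Ms.card := Finset.card_le_card hFMs
  have c2 : Ms.card ≤ F.card + H.card :=
    le_trans (Finset.card_le_card hMsFH) (Finset.card_union_le F H)
  have key : 2 * q h = 2 * F.card + H.card := by
    have : ((2 * q h : ℕ) : ℚ) = ((2 * F.card + H.card : ℕ) : ℚ) := by
      push_cast
      linarith
    exact_mod_cast this
  omega
end

section
/- In any instance of the Hospitals/Residents problem with couples in which every couple is separable (i.e., any combination of acceptable individual assignments, including leaving one member unmatched, is acceptable to the couple, with sub-responsive joint preferences), treating the members of each couple as independent single doctors, any matching that is stable for the resulting couples-free Hospitals/Residents instance is also stable for the original instance with couples. -/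
/-!
A joint preference induced coordinatewise by strict total orders can only rank a pair above the
couple's current assignment if it is strictly better for at least one member. By individual
rationality that member is not better off unmatched, so it moves to a new hospital, and every
disjunct of the couple's blocking condition leaves that hospital room for, or a preference for,
the moving member. That member then blocks alone as a single doctor, contradicting stability of
the couples-free instance.
-/
namespace Stmt3

variable {D H : Type}

/-- The set of assignees of hospital `h` in matching `M`. -/
def asg [Fintype D] [DecidableEq H] (M : D → Option H) (h : H) : Finset D :=
  Finset.univ.filter (fun d => M d = some h)

/-- Hospital `h` is undersubscribed, or prefers doctor `c` to some current assignee
(excluding `excl`, if given). -/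
def canImprove [Fintype D] [DecidableEq D] [DecidableEq H] (cap : H → ℕ)
    (hPref : H → D → D → Prop) (M : D → Option H) (h : H) (c : D) (excl : Option D) : Prop :=
  (asg M h).card < cap h ∨ ∃ r ∈ asg M h, (∀ x, excl = some x → r ≠ x) ∧ hPref h c r

/-- The McDermid–Manlove blocking condition for a couple `(c1, c2)` together with an
acceptable pair `p` of (optional) hospitals, given that the couple prefers `p` to its
current assignment. -/
def coupleBlockPair [Fintype D] [DecidableEq D] [DecidableEq H]
    (cap : H → ℕ) (hPref : H → D → D → Prop)
    (M : D → Option H) (c1 c2 : D) : Option H × Option H → Prop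
  | (some hj, some hk) =>
      (M c1 = some hj ∧ canImprove cap hPref M hk c2 (some c1)) ∨
      (M c2 = some hk ∧ canImprove cap hPref M hj c1 (some c2)) ∨
      (M c1 ≠ some hj ∧ M c2 ≠ some hk ∧
        ((hj ≠ hk ∧ canImprove cap hPref M hj c1 none ∧ canImprove cap hPref M hk c2 none) ∨
         (hj = hk ∧ 2 ≤ cap hj - (asg M hj).card) ∨
         (hj = hk ∧ cap hj - (asg M hj).card = 1 ∧
            ∃ r ∈ asg M hj, hPref hj c1 r ∨ hPref hj c2 r) ∨
         (hj = hk ∧ (asg M hj).card = cap hj ∧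
            ∃ r ∈ asg M hj, ∃ s ∈ asg M hj, r ≠ s ∧ hPref hj c1 r ∧ hPref hj c2 s)))
  | (some hj, none) => M c1 = some hj ∨ canImprove cap hPref M hj c1 none
  | (none, some hk) => M c2 = some hk ∨ canImprove cap hPref M hk c2 none
  | (none, none) => False

section Coordinatewise

variable {α β : Type*} {r : α × β → α × β → Prop} {r₁ : α → α → Prop} {r₂ : β → β → Prop}

theorem rel_fst_or_rel_snd_of_rel (htrans : ∀ ⦃x y z⦄, r x y → r y z → r x z)
    (hirr : ∀ p, ¬ r p p) (htri₁ : ∀ a a', a = a' ∨ r₁ a a' ∨ r₁ a' a)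
    (htri₂ : ∀ b b', b = b' ∨ r₂ b b' ∨ r₂ b' b)
    (hfst : ∀ a a' b, r (a, b) (a', b) ↔ r₁ a a') (hsnd : ∀ a b b', r (a, b) (a, b') ↔ r₂ b b')
    {p q : α × β} (h : r p q) : r₁ p.1 q.1 ∨ r₂ p.2 q.2 := by
  obtain ⟨a, b⟩ := p
  obtain ⟨a', b'⟩ := q
  by_contra! hnot
  have ha : a' = a ∨ r (a', b) (a, b) := by
    rcases htri₁ a a' with rfl | h₁ | h₁
    exacts [Or.inl rfl, absurd h₁ hnot.1, Or.inr ((hfst _ _ _).2 h₁)]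
  have hb : b' = b ∨ r (a', b') (a', b) := by
    rcases htri₂ b b' with rfl | h₂ | h₂
    exacts [Or.inl rfl, absurd h₂ hnot.2, Or.inr ((hsnd _ _ _).2 h₂)]
  rcases ha with rfl | ha <;> rcases hb with rfl | hb
  · exact hirr _ h
  · exact hirr _ (htrans h hb)
  · exact hirr _ (htrans h ha)
  · exact hirr _ (htrans (htrans h hb) ha)

end Coordinatewise

theorem not_rel_none_of_acceptable {α : Type*} {r : Option α → Option α → Prop} {acc : α → Prop}
    (htrans : ∀ ⦃x y z⦄, r x y → r y z → r x z) (hirr : ∀ o, ¬ r o o)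
    (hrat : ∀ a, acc a → r (some a) none)
    {o : Option α} (ho : ∀ a, o = some a → acc a) : ¬ r none o := by
  intro h
  cases o with
  | none => exact hirr _ h
  | some a => exact hirr _ (htrans h (hrat a (ho a rfl)))

section Blocking

variable [Fintype D] [DecidableEq D] [DecidableEq H] {cap : H → ℕ} {hPref : H → D → D → Prop}
  {M : D → Option H}

theorem canImprove_none_of_some {h : H} {c x : D} (hc : canImprove cap hPref M h c (some x)) :
    canImprove cap hPref M h c none := by
  rcases hc with hu | ⟨r, hr, -, hp⟩
  · exact Or.inl hu
  · exact Or.inr ⟨r, hr, nofun, hp⟩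

theorem canImprove_of_same_hospital {hj hk : H} {c₁ c₂ : D}
    (hblock : (hj = hk ∧ 2 ≤ cap hj - (asg M hj).card) ∨
      (hj = hk ∧ cap hj - (asg M hj).card = 1 ∧
        ∃ r ∈ asg M hj, hPref hj c₁ r ∨ hPref hj c₂ r) ∨
      (hj = hk ∧ (asg M hj).card = cap hj ∧
        ∃ r ∈ asg M hj, ∃ s ∈ asg M hj, r ≠ s ∧ hPref hj c₁ r ∧ hPref hj c₂ s)) :
    canImprove cap hPref M hj c₁ none ∧ canImprove cap hPref M hk c₂ none := by
  rcases hblock with ⟨rfl, hfree⟩ | ⟨rfl, hfree, -⟩ | ⟨rfl, -, r, hr, s, hs, -, hr₁, hs₂⟩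
  · exact ⟨Or.inl (by omega), Or.inl (by omega)⟩
  · exact ⟨Or.inl (by omega), Or.inl (by omega)⟩
  · exact ⟨Or.inr ⟨r, hr, nofun, hr₁⟩, Or.inr ⟨s, hs, nofun, hs₂⟩⟩

theorem canImprove_of_coupleBlockPair {c₁ c₂ : D} {p : Option H × Option H}
    (hblock : coupleBlockPair cap hPref M c₁ c₂ p) :
    (∀ h, p.1 = some h → M c₁ ≠ some h → canImprove cap hPref M h c₁ none) ∧
      (∀ h, p.2 = some h → M c₂ ≠ some h → canImprove cap hPref M h c₂ none) := by
  obtain ⟨_ | hj, _ | hk⟩ := p <;>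
    simp only [reduceCtorEq, Option.some.injEq, forall_eq', IsEmpty.forall_iff, implies_true,
      true_and, and_true]
  · exact hblock.resolve_left
  · exact hblock.resolve_left
  · rcases hblock with ⟨hM₁, hc₂⟩ | ⟨hM₂, hc₁⟩ | ⟨-, -, ⟨-, hc₁, hc₂⟩ | hsame⟩
    · exact ⟨fun hM => absurd hM₁ hM, fun _ => canImprove_none_of_some hc₂⟩
    · exact ⟨fun _ => canImprove_none_of_some hc₁, fun hM => absurd hM₂ hM⟩
    · exact ⟨fun _ => hc₁, fun _ => hc₂⟩
    · obtain ⟨hc₁, hc₂⟩ := canImprove_of_same_hospital hsame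
      exact ⟨fun _ => hc₁, fun _ => hc₂⟩

end Blocking

theorem stmt_3_general [Fintype D] [DecidableEq D] [DecidableEq H]
    (cap : H → ℕ) (acc : D → H → Prop)
    (hPref : H → D → D → Prop)
    -- individual strict preferences over `Option H` (being unmatched is an outcome)
    (ip : D → Option H → Option H → Prop)
    (iptrans : ∀ d, Transitive (ip d))
    (ipirr : ∀ d o, ¬ ip d o o)
    (iptrich : ∀ d o o', o = o' ∨ ip d o o' ∨ ip d o' o)
    -- acceptable hospitals are preferred to being unmatched
    (iprat : ∀ d h, acc d h → ip d (some h) none)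
    (M : D → Option H)
    -- feasibility
    (hfeas1 : ∀ d h, M d = some h → acc d h)
    -- HR-stability of M when every doctor (including couple members) is treated as single
    (hstab : ∀ d h, acc d h → ip d (some h) (M d) → ¬ canImprove cap hPref M h d none)
    -- the couple
    (c1 c2 : D)
    -- joint strict preference of the couple
    (jp : Option H × Option H → Option H × Option H → Prop)
    (jptrans : Transitive jp)
    (jpirr : ∀ p, ¬ jp p p)
    -- separable / sub-complete acceptable set: any combination of individually
    -- acceptable assignments (including one member unmatched) is acceptable
    (AC : Set (Option H × Option H))
    (hAC : AC = {p | (∀ h, p.1 = some h → acc c1 h) ∧ (∀ h, p.2 = some h → acc c2 h)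
                  ∧ p ≠ (none, none)})
    -- sub-responsiveness: the joint order is induced coordinatewise by ip
    (hresp1 : ∀ a b b', jp (a, b) (a, b') ↔ ip c2 b b')
    (hresp2 : ∀ a a' b, jp (a, b) (a', b) ↔ ip c1 a a') :
    (∀ d h, acc d h → ip d (some h) (M d) → ¬ canImprove cap hPref M h d none) ∧
    (∀ p ∈ AC, jp p (M c1, M c2) → ¬ coupleBlockPair cap hPref M c1 c2 p) := by
  refine ⟨hstab, ?_⟩
  rintro p hp hjp hblock
  subst hAC
  obtain ⟨hacc₁, hacc₂, -⟩ := hp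
  obtain ⟨hmove₁, hmove₂⟩ := canImprove_of_coupleBlockPair hblock
  have not_improves : ∀ d o, ip d o (M d) → (∀ h, o = some h → acc d h) →
      (∀ h, o = some h → M d ≠ some h → canImprove cap hPref M h d none) → False := by
    rintro d (_ | h) hip hacc himp
    · exact not_rel_none_of_acceptable (iptrans d) (ipirr d) (iprat d) (hfeas1 d) hip
    · have hmoved : M d ≠ some h := fun hM => ipirr d _ (hM ▸ hip)
      exact hstab d h (hacc h rfl) hip (himp h rfl hmoved)
  rcases rel_fst_or_rel_snd_of_rel jptrans jpirr (iptrich c1) (iptrich c2) hresp2 hresp1 hjp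
    with hip | hip
  · exact not_improves c1 _ hip hacc₁ hmove₁
  · exact not_improves c2 _ hip hacc₂ hmove₂

/-- for a separable couple with sub-responsive (coordinatewise induced)
joint preferences, a matching that is stable when all doctors are treated as singles
admits no blocking coalition in the instance with the couple:
no single doctor blocks, and the couple blocks with no acceptable pair. -/
theorem stmt_3 [Fintype D] [DecidableEq D] [DecidableEq H]
    (cap : H → ℕ) (acc : D → H → Prop)
    (hPref : H → D → D → Prop)
    -- individual strict preferences over `Option H` (being unmatched is an outcome)
    (ip : D → Option H → Option H → Prop)
    (iptrans : ∀ d, Transitive (ip d))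
    (ipirr : ∀ d o, ¬ ip d o o)
    (iptrich : ∀ d o o', o = o' ∨ ip d o o' ∨ ip d o' o)
    -- acceptable hospitals are preferred to being unmatched
    (iprat : ∀ d h, acc d h → ip d (some h) none)
    (M : D → Option H)
    -- feasibility
    (hfeas1 : ∀ d h, M d = some h → acc d h)
    (hfeas2 : ∀ h, (asg M h).card ≤ cap h)
    -- HR-stability of M when every doctor (including couple members) is treated as single
    (hstab : ∀ d h, acc d h → ip d (some h) (M d) → ¬ canImprove cap hPref M h d none)
    -- the couple
    (c1 c2 : D) (hne : c1 ≠ c2)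
    -- joint strict preference of the couple
    (jp : Option H × Option H → Option H × Option H → Prop)
    (jptrans : Transitive jp)
    (jpirr : ∀ p, ¬ jp p p)
    -- separable / sub-complete acceptable set: any combination of individually
    -- acceptable assignments (including one member unmatched) is acceptable
    (AC : Set (Option H × Option H))
    (hAC : AC = {p | (∀ h, p.1 = some h → acc c1 h) ∧ (∀ h, p.2 = some h → acc c2 h)
                  ∧ p ≠ (none, none)})
    -- sub-responsiveness: the joint order is induced coordinatewise by ip
    (hresp1 : ∀ a b b', jp (a, b) (a, b') ↔ ip c2 b b')
    (hresp2 : ∀ a a' b, jp (a, b) (a', b) ↔ ip c1 a a') :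
    (∀ d h, acc d h → ip d (some h) (M d) → ¬ canImprove cap hPref M h d none) ∧
    (∀ p ∈ AC, jp p (M c1, M c2) → ¬ coupleBlockPair cap hPref M c1 c2 p) :=
  stmt_3_general cap acc hPref ip iptrans ipirr iptrich iprat M hfeas1 hstab c1 c2 jp jptrans jpirr
    AC hAC hresp1 hresp2

end Stmt3
end

section
/- Consider the enforcer gadget: couples (u1,u2) with sole acceptable pair (h1,h2); (u3,u4) with acceptable pairs (h1,h4) ≻ (h3,h2); single doctor u5 with preference y ≻ h1; hospitals all of capacity 1 with preferences h1: u5 ≻ u1 ≻ u3; h2: u4 ≻ u2; h3: u3 only; h4: u4 only; and y ranking u5 last after its other acceptable doctors. Then in every stable matching of any HRC instance containing this gadget, y is matched to a doctor it prefers to u5 (in particular y is not unmatched and not matched to u5). -/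
/-- in every stable matching of an HRC instance containing the enforcer
gadget, the hospital `y` is matched to a doctor it prefers to `u5`. -/
theorem stmt_11 {D H : Type}
    (u1 u2 u3 u4 u5 : D) (h1 h2 h3 h4 y : H)
    (hDdist : List.Pairwise (· ≠ ·) [u1, u2, u3, u4, u5])
    (hHdist : List.Pairwise (· ≠ ·) [h1, h2, h3, h4, y])
    -- y's preference list: yPref d = rank of d in y's list, u5 ranked last
    (accY : D → Prop) (yPref : D → ℕ)
    (haccY5 : accY u5)
    (hyLast : ∀ d, accY d → d ≠ u5 → yPref d < yPref u5)
    -- h1's list: u5 ≻ u1 ≻ u3 ; h2's list: u4 ≻ u2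
    (r1 r2 : D → ℕ)
    (hr1 : r1 u5 = 0 ∧ r1 u1 = 1 ∧ r1 u3 = 2)
    (hr2 : r2 u4 = 0 ∧ r2 u2 = 1)
    (M : D → Option H)
    -- unit capacities
    (hinj : ∀ d d' h, M d = some h → M d' = some h → d = d')
    -- feasibility of the gadget agents
    (hu5 : M u5 = none ∨ M u5 = some y ∨ M u5 = some h1)
    (hc12 : (M u1 = some h1 ∧ M u2 = some h2) ∨ (M u1 = none ∧ M u2 = none))
    (hc34 : (M u3 = some h1 ∧ M u4 = some h4) ∨ (M u3 = some h3 ∧ M u4 = some h2) ∨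
            (M u3 = none ∧ M u4 = none))
    (hyacc : ∀ d, M d = some y → accY d)
    (hh1 : ∀ d, M d = some h1 → d = u5 ∨ d = u1 ∨ d = u3)
    (hh2 : ∀ d, M d = some h2 → d = u4 ∨ d = u2)
    (hh3 : ∀ d, M d = some h3 → d = u3)
    (hh4 : ∀ d, M d = some h4 → d = u4)
    -- stability: no blocking coalition involving the gadget agents
    -- (u5, y): u5's first choice is y
    (s1 : ¬ (M u5 ≠ some y ∧
        ((∀ d, M d ≠ some y) ∨ ∃ d, M d = some y ∧ yPref u5 < yPref d)))
    -- (u5, h1): u5 prefers h1 to being unmatched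
    (s2 : ¬ (M u5 = none ∧
        ((∀ d, M d ≠ some h1) ∨ ∃ d, M d = some h1 ∧ r1 u5 < r1 d)))
    -- couple (u1,u2) with its sole acceptable pair (h1,h2)
    (s3 : ¬ (¬ (M u1 = some h1 ∧ M u2 = some h2) ∧
        ((∀ d, M d ≠ some h1) ∨ ∃ d, M d = some h1 ∧ r1 u1 < r1 d) ∧
        ((∀ d, M d ≠ some h2) ∨ ∃ d, M d = some h2 ∧ r2 u2 < r2 d)))
    -- couple (u3,u4) with its first pair (h1,h4); h4 accepts only u4
    (s4 : ¬ (¬ (M u3 = some h1 ∧ M u4 = some h4) ∧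
        ((∀ d, M d ≠ some h1) ∨ ∃ d, M d = some h1 ∧ r1 u3 < r1 d) ∧
        (∀ d, M d ≠ some h4)))
    -- couple (u3,u4) with its second pair (h3,h2); preferred only when unmatched
    (s5 : ¬ (M u3 = none ∧ M u4 = none ∧
        (∀ d, M d ≠ some h3) ∧
        ((∀ d, M d ≠ some h2) ∨ ∃ d, M d = some h2 ∧ r2 u4 < r2 d))) :
    ∃ d, M d = some y ∧ yPref d < yPref u5 := by
  simp only [List.pairwise_cons, List.mem_cons, List.not_mem_nil, List.mem_singleton,
    forall_eq_or_imp, forall_eq] at hDdist hHdist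
  obtain ⟨⟨d12, d13, d14, d15, -⟩, ⟨d23, d24, d25, -⟩, ⟨d34, d35, -⟩, ⟨d45, -⟩, -⟩ := hDdist
  obtain ⟨⟨e12, e13, e14, e1y, -⟩, ⟨e23, e24, e2y, -⟩, ⟨e34, e3y, -⟩, ⟨e4y, -⟩, -⟩ := hHdist
  obtain ⟨hr1a, hr1b, hr1c⟩ := hr1
  obtain ⟨hr2a, hr2b⟩ := hr2
  -- u5 is matched
  have hu5n : M u5 ≠ none := by
    intro hn
    apply s2
    refine ⟨hn, ?_⟩
    by_cases hE : ∀ d, M d ≠ some h1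
    · exact Or.inl hE
    · push_neg at hE
      obtain ⟨d, hd⟩ := hE
      refine Or.inr ⟨d, hd, ?_⟩
      rcases hh1 d hd with h | h | h
      · subst h; rw [hn] at hd; cases hd
      · subst h; rw [hr1a, hr1b]; omega
      · subst h; rw [hr1a, hr1c]; omega
  -- u5 is not matched to y
  have hkey : M u5 ≠ some y := by
    intro h5y
    rcases hc12 with ⟨m1, m2⟩ | ⟨m1, m2⟩
    · rcases hc34 with ⟨m3, m4⟩ | ⟨m3, m4⟩ | ⟨m3, m4⟩
      · exact d13 (hinj u1 u3 h1 m1 m3)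
      · exact d24 (hinj u2 u4 h2 m2 m4)
      · -- couple (u3,u4) blocks with (h3,h2)
        apply s5
        refine ⟨m3, m4, ?_, Or.inr ⟨u2, m2, by rw [hr2a, hr2b]; omega⟩⟩
        intro d hd
        have h := hh3 d hd; subst h; rw [m3] at hd; cases hd
    · rcases hc34 with ⟨m3, m4⟩ | ⟨m3, m4⟩ | ⟨m3, m4⟩
      · -- couple (u1,u2) blocks with (h1,h2)
        apply s3
        refine ⟨?_, Or.inr ⟨u3, m3, by rw [hr1b, hr1c]; omega⟩, Or.inl ?_⟩
        · rintro ⟨a, -⟩; rw [m1] at a; cases a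
        intro d hd
        rcases hh2 d hd with h | h
        · subst h; rw [m4] at hd; exact e24 (Option.some.inj hd).symm
        · subst h; rw [m2] at hd; cases hd
      · -- couple (u3,u4) blocks with (h1,h4)
        apply s4
        refine ⟨?_, Or.inl ?_, ?_⟩
        · rintro ⟨a, -⟩; rw [m3] at a; exact e13 (Option.some.inj a).symm
        · intro d hd
          rcases hh1 d hd with h | h | h
          · subst h; rw [h5y] at hd; exact e1y (Option.some.inj hd).symm
          · subst h; rw [m1] at hd; cases hd
          · subst h; rw [m3] at hd; exact e13 (Option.some.inj hd).symm
        · intro d hd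
          have h := hh4 d hd; subst h; rw [m4] at hd; exact e24 (Option.some.inj hd)
      · -- couple (u3,u4) blocks with (h1,h4), all empty
        apply s4
        refine ⟨?_, Or.inl ?_, ?_⟩
        · rintro ⟨a, -⟩; rw [m3] at a; cases a
        · intro d hd
          rcases hh1 d hd with h | h | h
          · subst h; rw [h5y] at hd; exact e1y (Option.some.inj hd).symm
          · subst h; rw [m1] at hd; cases hd
          · subst h; rw [m3] at hd; cases hd
        · intro d hd
          have h := hh4 d hd; subst h; rw [m4] at hd; cases hd
  -- conclude from s1
  push_neg at s1
  have := s1 hkey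
  obtain ⟨⟨d, hd⟩, hall⟩ := this
  refine ⟨d, hd, ?_⟩
  have hne : d ≠ u5 := fun h => hkey (h ▸ hd)
  exact hyLast d (hyacc d hd) hne
end

section
/- In any stable matching of the HRC instance constructed from a clause gadget—hospitals z¹,z²,z³,z⁴,z⁵ and c¹,c²,c³ of capacity 1, couples (p¹,p⁴),(p²,p⁵),(p³,p⁶) where (pˢ,pˢ⁺³) finds acceptable (z¹,z²) ≻ (cˢ,zˢ⁺²), single doctors s with preference c¹ ≻ c² ≻ c³ and t with preference z³ ≻ z⁴ ≻ z⁵, and hospital preferences z¹: p¹≻p²≻p³, z²: p⁶≻p⁵≻p⁴, z²⁺ˢ: p³⁺ˢ ≻ t, cˢ: pˢ ≻ xˢ ≻ s (where xˢ is some external doctor)—the hospitals z¹ and z² are both matched, all six doctors p are matched, and t is matched. -/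
/-!
An unmatched couple s would block with its second choice (cˢ, zˢ⁺²): cˢ ranks pˢ first, and
zˢ⁺² can only hold pˢ⁺³ or the less preferred t. So every couple sits at (z¹, z²) or at its
second choice, and if no couple took (z¹, z²) both hospitals would be free and couple 1 would
block there. Finally, if couple s holds (z¹, z²), then zˢ⁺² is free, so t would block with zˢ⁺²
if it were unmatched.
-/

section ClauseGadget

variable {ι D H : Type} {M : D → Option H}

/-- Hospital `h`, whose ranking is `r` (lower is better), is free or prefers `d` to its assignee. -/
def FreeOrPrefers (M : D → Option H) (h : H) (r : D → ℕ) (d : D) : Prop :=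
  (∀ d', M d' ≠ some h) ∨ ∃ d', M d' = some h ∧ r d < r d'

theorem FreeOrPrefers.of_forall_lt {h : H} {r : D → ℕ} {d : D}
    (hr : ∀ d', M d' = some h → r d < r d') : FreeOrPrefers M h r d := by
  by_cases hocc : ∃ d', M d' = some h
  · obtain ⟨d', hd'⟩ := hocc
    exact Or.inr ⟨d', hd', hr d' hd'⟩
  · exact Or.inl fun d' hd' => hocc ⟨d', hd'⟩

theorem couple_matched_of_not_blocking {a b t : D} {c z : H} {rc rz : D → ℕ}
    (hc : ∀ d, d ≠ a → rc a < rc d) (hz : ∀ d, M d = some z → d = b ∨ d = t)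
    (hrz : rz b < rz t)
    (hblock : ¬ (M a = none ∧ M b = none ∧ FreeOrPrefers M c rc a ∧ FreeOrPrefers M z rz b)) :
    ¬ (M a = none ∧ M b = none) := by
  rintro ⟨ha, hb⟩
  refine hblock ⟨ha, hb, .of_forall_lt fun d hd => hc d ?_, .of_forall_lt fun d hd => ?_⟩
  · rintro rfl
    simp [ha] at hd
  · rcases hz d hd with rfl | rfl
    · simp [hb] at hd
    · exact hrz

theorem exists_couple_at_top {pa pb : ι → D} {z1 z2 : H} {cc zz : ι → H} {r1 r2 : D → ℕ}
    (i₀ : ι)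
    (hmatched : ∀ i, (M (pa i) = some z1 ∧ M (pb i) = some z2) ∨
      (M (pa i) = some (cc i) ∧ M (pb i) = some (zz i)))
    (hz1 : ∀ d, M d = some z1 → ∃ i, d = pa i) (hz2 : ∀ d, M d = some z2 → ∃ i, d = pb i)
    (hcc : ∀ i, z1 ≠ cc i) (hzz : ∀ i, z2 ≠ zz i)
    (hblock : ¬ (¬ (M (pa i₀) = some z1 ∧ M (pb i₀) = some z2) ∧
      FreeOrPrefers M z1 r1 (pa i₀) ∧ FreeOrPrefers M z2 r2 (pb i₀))) :
    ∃ i, M (pa i) = some z1 ∧ M (pb i) = some z2 := by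
  by_contra! hnone
  have hsecond : ∀ i, M (pa i) = some (cc i) ∧ M (pb i) = some (zz i) := fun i =>
    (hmatched i).resolve_left fun h => hnone i h.1 h.2
  refine hblock ⟨fun h => hnone i₀ h.1 h.2, Or.inl fun d hd => ?_, Or.inl fun d hd => ?_⟩
  · obtain ⟨j, rfl⟩ := hz1 d hd
    rw [(hsecond j).1] at hd
    exact hcc j (Option.some.inj hd).symm
  · obtain ⟨j, rfl⟩ := hz2 d hd
    rw [(hsecond j).2] at hd
    exact hzz j (Option.some.inj hd).symm

theorem matched_of_not_blocking {b t : D} {z : H} {r : D → ℕ} {P : Prop}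
    (hz : ∀ d, M d = some z → d = b ∨ d = t) (hb : M b ≠ some z)
    (hblock : ¬ ((M t = none ∨ P) ∧ FreeOrPrefers M z r t)) :
    M t ≠ none := by
  intro ht
  refine hblock ⟨Or.inl ht, Or.inl fun d hd => ?_⟩
  rcases hz d hd with rfl | rfl
  · exact hb hd
  · simp [ht] at hd

end ClauseGadget

/-- `pa i`/`pb i` (i : Fin 3) are pˢ/pˢ⁺³, `zz i` are z³,z⁴,z⁵, `cc i` are c¹,c²,c³,
and `dt` is the single doctor t. -/
theorem stmt_16_general {D H : Type}
    (pa pb : Fin 3 → D) (dt : D)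
    (z1 z2 : H) (zz cc : Fin 3 → H)
    -- distinctness of hospitals
    (hH2 : ∀ i, z1 ≠ zz i ∧ z2 ≠ zz i ∧ z1 ≠ cc i ∧ z2 ≠ cc i)
    (M : D → Option H)
    -- feasibility: each couple (pa i, pb i) is at (z1,z2), at (cc i, zz i), or unmatched
    (hcouple : ∀ i, (M (pa i) = some z1 ∧ M (pb i) = some z2) ∨
        (M (pa i) = some (cc i) ∧ M (pb i) = some (zz i)) ∨
        (M (pa i) = none ∧ M (pb i) = none))
    (hz1 : ∀ d, M d = some z1 → ∃ i, d = pa i)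
    (hz2 : ∀ d, M d = some z2 → ∃ i, d = pb i)
    (hzz : ∀ d i, M d = some (zz i) → d = pb i ∨ d = dt)
    -- hospital preference ranks (lower = better):
    -- z1 : p1 ≻ p2 ≻ p3 ; z2 : p6 ≻ p5 ≻ p4 ; z^{2+s} : p^{3+s} ≻ t ; c^s : p^s first
    (rz1 rz2 : D → ℕ)
    (rzz : Fin 3 → D → ℕ)
    (hrzz : ∀ i, rzz i (pb i) = 0 ∧ rzz i dt = 1)
    (rcc : Fin 3 → D → ℕ)
    (hrcc : ∀ i, rcc i (pa i) = 0 ∧ (∀ d, d ≠ pa i → 0 < rcc i d))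
    -- stability: couple i does not block with its first choice (z1, z2)
    (sTop : ∀ i, ¬ (¬ (M (pa i) = some z1 ∧ M (pb i) = some z2) ∧
        ((∀ d, M d ≠ some z1) ∨ ∃ d, M d = some z1 ∧ rz1 (pa i) < rz1 d) ∧
        ((∀ d, M d ≠ some z2) ∨ ∃ d, M d = some z2 ∧ rz2 (pb i) < rz2 d)))
    -- stability: couple i does not block with its second choice (cc i, zz i)
    (sSecond : ∀ i, ¬ (M (pa i) = none ∧ M (pb i) = none ∧
        ((∀ d, M d ≠ some (cc i)) ∨ ∃ d, M d = some (cc i) ∧ rcc i (pa i) < rcc i d) ∧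
        ((∀ d, M d ≠ some (zz i)) ∨ ∃ d, M d = some (zz i) ∧ rzz i (pb i) < rzz i d)))
    -- stability: t (with list z³ ≻ z⁴ ≻ z⁵) does not block with zz i
    (sT : ∀ i : Fin 3, ¬ ((M dt = none ∨ ∃ j, M dt = some (zz j) ∧ (i : ℕ) < (j : ℕ)) ∧
        ((∀ d, M d ≠ some (zz i)) ∨ ∃ d, M d = some (zz i) ∧ rzz i dt < rzz i d))) :
    (∃ d, M d = some z1) ∧ (∃ d, M d = some z2) ∧
    (∀ i, M (pa i) ≠ none ∧ M (pb i) ≠ none) ∧ M dt ≠ none := by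
  have hmatched : ∀ i, (M (pa i) = some z1 ∧ M (pb i) = some z2) ∨
      (M (pa i) = some (cc i) ∧ M (pb i) = some (zz i)) := fun i =>
    (hcouple i).imp_right fun h => h.resolve_right <|
      couple_matched_of_not_blocking (fun d hd => (hrcc i).1 ▸ (hrcc i).2 d hd) (hzz · i)
        (by simp [hrzz]) (sSecond i)
  obtain ⟨i, hi1, hi2⟩ := exists_couple_at_top 0 hmatched hz1 hz2
    (fun i => (hH2 i).2.2.1) (fun i => (hH2 i).2.1) (sTop 0)
  refine ⟨⟨pa i, hi1⟩, ⟨pb i, hi2⟩, fun j => ?_,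
    matched_of_not_blocking (hzz · i) (by simpa [hi2] using (hH2 i).2.1) (sT i)⟩
  rcases hmatched j with h | h <;> simp [h.1, h.2]

/-- in any stable matching of an HRC instance containing the clause
gadget, z¹ and z² are matched, all six doctors p are matched, and t is matched.
Here `pa i`/`pb i` (i : Fin 3) are pˢ/pˢ⁺³, `zz i` are z³,z⁴,z⁵, `cc i` are c¹,c²,c³,
`ds` is the single doctor s, and `dt` is the single doctor t. -/
theorem stmt_16 {D H : Type}
    (pa pb : Fin 3 → D) (ds dt : D)
    (z1 z2 : H) (zz cc : Fin 3 → H)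
    -- distinctness of hospitals
    (hH1 : z1 ≠ z2)
    (hH2 : ∀ i, z1 ≠ zz i ∧ z2 ≠ zz i ∧ z1 ≠ cc i ∧ z2 ≠ cc i)
    (hH3 : ∀ i j, zz i ≠ cc j)
    (hH4 : ∀ i j, i ≠ j → zz i ≠ zz j ∧ cc i ≠ cc j)
    -- distinctness of doctors
    (hD1 : Function.Injective pa) (hD2 : Function.Injective pb)
    (hD3 : ∀ i j, pa i ≠ pb j)
    (hD4 : ∀ i, pa i ≠ ds ∧ pa i ≠ dt ∧ pb i ≠ ds ∧ pb i ≠ dt)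
    (hD5 : ds ≠ dt)
    (M : D → Option H)
    -- unit capacities
    (hinj : ∀ d d' h, M d = some h → M d' = some h → d = d')
    -- feasibility: each couple (pa i, pb i) is at (z1,z2), at (cc i, zz i), or unmatched
    (hcouple : ∀ i, (M (pa i) = some z1 ∧ M (pb i) = some z2) ∨
        (M (pa i) = some (cc i) ∧ M (pb i) = some (zz i)) ∨
        (M (pa i) = none ∧ M (pb i) = none))
    (hz1 : ∀ d, M d = some z1 → ∃ i, d = pa i)
    (hz2 : ∀ d, M d = some z2 → ∃ i, d = pb i)
    (hzz : ∀ d i, M d = some (zz i) → d = pb i ∨ d = dt)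
    (hds : M ds = none ∨ ∃ i, M ds = some (cc i))
    (hdt : M dt = none ∨ ∃ i, M dt = some (zz i))
    -- hospital preference ranks (lower = better):
    -- z1 : p1 ≻ p2 ≻ p3 ; z2 : p6 ≻ p5 ≻ p4 ; z^{2+s} : p^{3+s} ≻ t ; c^s : p^s first
    (rz1 rz2 : D → ℕ)
    (hrz1 : ∀ i, rz1 (pa i) = (i : ℕ))
    (hrz2 : ∀ i, rz2 (pb i) = 2 - (i : ℕ))
    (rzz : Fin 3 → D → ℕ)
    (hrzz : ∀ i, rzz i (pb i) = 0 ∧ rzz i dt = 1)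
    (rcc : Fin 3 → D → ℕ)
    (hrcc : ∀ i, rcc i (pa i) = 0 ∧ (∀ d, d ≠ pa i → 0 < rcc i d))
    -- stability: couple i does not block with its first choice (z1, z2)
    (sTop : ∀ i, ¬ (¬ (M (pa i) = some z1 ∧ M (pb i) = some z2) ∧
        ((∀ d, M d ≠ some z1) ∨ ∃ d, M d = some z1 ∧ rz1 (pa i) < rz1 d) ∧
        ((∀ d, M d ≠ some z2) ∨ ∃ d, M d = some z2 ∧ rz2 (pb i) < rz2 d)))
    -- stability: couple i does not block with its second choice (cc i, zz i)
    (sSecond : ∀ i, ¬ (M (pa i) = none ∧ M (pb i) = none ∧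
        ((∀ d, M d ≠ some (cc i)) ∨ ∃ d, M d = some (cc i) ∧ rcc i (pa i) < rcc i d) ∧
        ((∀ d, M d ≠ some (zz i)) ∨ ∃ d, M d = some (zz i) ∧ rzz i (pb i) < rzz i d)))
    -- stability: t (with list z³ ≻ z⁴ ≻ z⁵) does not block with zz i
    (sT : ∀ i : Fin 3, ¬ ((M dt = none ∨ ∃ j, M dt = some (zz j) ∧ (i : ℕ) < (j : ℕ)) ∧
        ((∀ d, M d ≠ some (zz i)) ∨ ∃ d, M d = some (zz i) ∧ rzz i dt < rzz i d))) :
    (∃ d, M d = some z1) ∧ (∃ d, M d = some z2) ∧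
    (∀ i, M (pa i) ≠ none ∧ M (pb i) ≠ none) ∧ M dt ≠ none :=
  stmt_16_general pa pb dt z1 z2 zz cc hH2 M hcouple hz1 hz2 hzz rz1 rz2 rzz hrzz rcc hrcc sTop
    sSecond sT
end

section
/- Given a multigraph G with loops, node capacities b, and strict node preferences over incident edges, construct an HRC instance where each node v becomes a hospital of capacity b(v) and each edge e=(u,v) becomes a connected couple applying only to the pair (u,v) (with loop edges giving couples applying to (v,v), and ties at loop endpoints broken arbitrarily but consistently in v's hospital list). Then a set of edges M is a stable multigraph b-matching of G if and only if the corresponding matching in the HRC instance is stable. -/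
namespace Stmt17

variable {V E : Type} [Fintype V] [Fintype E] [DecidableEq V] [DecidableEq E]

/-- Number of endpoints of edge `e` equal to `v` (a loop at `v` counts 2). -/
def icount (ends : E → V × V) (e : E) (v : V) : ℕ :=
  (if (ends e).1 = v then 1 else 0) + (if (ends e).2 = v then 1 else 0)

/-- Degree of `v` in the edge set `M` (loops occupy two positions). -/
def deg (ends : E → V × V) (M : Finset E) (v : V) : ℕ := ∑ e ∈ M, icount ends e v

/-- Blocking edge for a multigraph b-matching. -/
def mBlocks (ends : E → V × V) (b : V → ℕ) (rank : V → E → ℕ)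
    (M : Finset E) (e : E) : Prop :=
  e ∉ M ∧
  (((ends e).1 ≠ (ends e).2 ∧
      (∀ x, (x = (ends e).1 ∨ x = (ends e).2) →
        deg ends M x < b x ∨ ∃ f ∈ M, 0 < icount ends f x ∧ rank x e < rank x f)) ∨
   ((ends e).1 = (ends e).2 ∧
      (2 ≤ b (ends e).1 - deg ends M (ends e).1 ∨
       (1 ≤ b (ends e).1 - deg ends M (ends e).1 ∧
          ∃ f ∈ M, 0 < icount ends f (ends e).1 ∧ rank (ends e).1 e < rank (ends e).1 f) ∨
       (∃ f ∈ M, (ends f).1 = (ends e).1 ∧ (ends f).2 = (ends e).1 ∧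
          rank (ends e).1 e < rank (ends e).1 f) ∨
       (∃ f ∈ M, ∃ g ∈ M, f ≠ g ∧ 0 < icount ends f (ends e).1 ∧
          0 < icount ends g (ends e).1 ∧
          rank (ends e).1 e < rank (ends e).1 f ∧ rank (ends e).1 e < rank (ends e).1 g))))

/-- The endpoint of edge `e` assigned to couple member `i`. -/
def endOf (ends : E → V × V) (e : E) (i : Bool) : V := if i then (ends e).2 else (ends e).1

/-- Hospital `v`'s strict preference rank over doctors (couple members): the rank of the
underlying edge, with the tie at a loop broken consistently (first member better). -/
def hrank (rank : V → E → ℕ) (v : V) (p : E × Bool) : ℕ :=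
  2 * rank v p.1 + (if p.2 then 1 else 0)

/-- Number of doctors assigned to hospital `h` in the HRC matching `N`. -/
def hcount (N : E × Bool → Option V) (h : V) : ℕ :=
  (Finset.univ.filter (fun p : E × Bool => N p = some h)).card

/-- Blocking coalition in the HRC instance: the connected couple corresponding to
edge `e` (unmatched, since its sole acceptable pair is `(u,v)`) blocks. -/
def hrcBlocks (ends : E → V × V) (b : V → ℕ) (rank : V → E → ℕ)
    (N : E × Bool → Option V) (e : E) : Prop :=
  (N (e, false) = none ∧ N (e, true) = none) ∧
  (((ends e).1 ≠ (ends e).2 ∧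
      (∀ i : Bool, hcount N (endOf ends e i) < b (endOf ends e i) ∨
        ∃ p, N p = some (endOf ends e i) ∧
          hrank rank (endOf ends e i) (e, i) < hrank rank (endOf ends e i) p)) ∨
   ((ends e).1 = (ends e).2 ∧
      (2 ≤ b (ends e).1 - hcount N (ends e).1 ∨
       (1 ≤ b (ends e).1 - hcount N (ends e).1 ∧
          ∃ p, N p = some (ends e).1 ∧
            (hrank rank (ends e).1 (e, false) < hrank rank (ends e).1 p ∨
             hrank rank (ends e).1 (e, true) < hrank rank (ends e).1 p)) ∨
       (∃ p q, p ≠ q ∧ N p = some (ends e).1 ∧ N q = some (ends e).1 ∧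
          hrank rank (ends e).1 (e, false) < hrank rank (ends e).1 p ∧
          hrank rank (ends e).1 (e, true) < hrank rank (ends e).1 q))))

/-- a set of edges `M` of a multigraph (with loops) is a stable multigraph
b-matching iff the corresponding matching `N` of the constructed HRC instance (each node
a hospital of capacity `b v`, each edge a connected couple applying only to its pair of
endpoints) is stable. -/
theorem stmt_17 (ends : E → V × V) (b : V → ℕ) (rank : V → E → ℕ)
    -- strict preferences over incident edges
    (hstrict : ∀ v e f, 0 < icount ends e v → 0 < icount ends f v →
        rank v e = rank v f → e = f)
    (M : Finset E)
    (hfeas : ∀ v, deg ends M v ≤ b v)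
    -- the corresponding HRC matching
    (N : E × Bool → Option V)
    (hN : ∀ e i, N (e, i) = if e ∈ M then some (endOf ends e i) else none) :
    (∀ e, ¬ mBlocks ends b rank M e) ↔ (∀ e, ¬ hrcBlocks ends b rank N e) := by
  -- characterization of N
  have hNsome : ∀ (p : E × Bool) (v : V),
      N p = some v ↔ p.1 ∈ M ∧ endOf ends p.1 p.2 = v := by
    rintro ⟨f, j⟩ v
    rw [hN]
    by_cases hf : f ∈ M <;> simp [hf]
  have hinc : ∀ (f : E) (j : Bool) (v : V), endOf ends f j = v → 0 < icount ends f v := by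
    intro f j v h
    cases j <;> simp [endOf] at h <;> simp [icount, h]
  have pick : ∀ (f : E) (v : V), 0 < icount ends f v → ∃ j : Bool, endOf ends f j = v := by
    intro f v h
    by_cases h1 : (ends f).1 = v
    · exact ⟨false, h1⟩
    · by_cases h2 : (ends f).2 = v
      · exact ⟨true, h2⟩
      · simp [icount, h1, h2] at h
  have hcnt : ∀ v, hcount N v = deg ends M v := by
    intro v
    rw [hcount, Finset.card_filter, Fintype.sum_prod_type, deg,
      show (M : Finset E) = Finset.univ ∩ M by simp, ← Finset.sum_ite_mem]
    refine Finset.sum_congr rfl fun f _ => ?_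
    by_cases hf : f ∈ M
    · simp only [Fintype.sum_bool, hN, hf, if_true, icount, endOf, Option.some_inj,
        if_false, Bool.cond_true]
      simp only [if_true, Bool.false_eq_true]
      split_ifs <;> simp_all
    · simp [Fintype.sum_bool, hN, hf]
  -- rank comparison transfer
  have rlt : ∀ (v : V) (e f : E), e ∉ M → 0 < icount ends e v → f ∈ M →
      0 < icount ends f v → 2 * rank v e < 2 * rank v f + 1 → rank v e < rank v f := by
    intro v e f heM hei hfM hfi h
    rcases lt_trichotomy (rank v e) (rank v f) with h' | h' | h'
    · exact h'
    · exact absurd (hstrict v e f hei hfi h') (fun hef => heM (hef ▸ hfM))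
    · omega
  have fwd : ∀ (v : V) (e : E), (∃ f ∈ M, 0 < icount ends f v ∧ rank v e < rank v f) →
      ∃ p, N p = some v ∧ 2 * rank v e + 1 < hrank rank v p := by
    rintro v e ⟨f, hfM, hfi, hr⟩
    obtain ⟨j, hj⟩ := pick f v hfi
    refine ⟨(f, j), (hNsome (f, j) v).2 ⟨hfM, hj⟩, ?_⟩
    unfold hrank
    cases j <;> simp <;> omega
  have bwd : ∀ (v : V) (e : E), e ∉ M → 0 < icount ends e v →
      (∃ p, N p = some v ∧ 2 * rank v e < hrank rank v p) →
      ∃ f ∈ M, 0 < icount ends f v ∧ rank v e < rank v f := by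
    rintro v e heM hei ⟨⟨f, j⟩, hp, hlt⟩
    obtain ⟨hfM, hfv⟩ := (hNsome (f, j) v).1 hp
    have hfi := hinc f j v hfv
    refine ⟨f, hfM, hfi, rlt v e f heM hei hfM hfi ?_⟩
    unfold hrank at hlt
    cases j <;> simp at hlt <;> omega
  have unmatched : ∀ e, e ∉ M ↔ (N (e, false) = none ∧ N (e, true) = none) := by
    intro e
    rw [hN, hN]
    by_cases h : e ∈ M <;> simp [h]
  have key : ∀ e, mBlocks ends b rank M e ↔ hrcBlocks ends b rank N e := by
    intro e
    unfold mBlocks hrcBlocks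
    rw [← unmatched e]
    refine and_congr_right fun heM => or_congr ?_ ?_
    · refine and_congr_right fun _ => ?_
      constructor
      · intro h i
        rcases h (endOf ends e i) (by cases i <;> simp [endOf]) with h1 | h2
        · left; rw [hcnt]; exact h1
        · right
          obtain ⟨p, hp, hlt⟩ := fwd _ _ h2
          refine ⟨p, hp, lt_of_le_of_lt ?_ hlt⟩
          unfold hrank; cases i <;> simp
      · intro h x hx
        obtain ⟨i, hi⟩ : ∃ i : Bool, endOf ends e i = x := by
          rcases hx with rfl | rfl
          exacts [⟨false, rfl⟩, ⟨true, rfl⟩]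
        subst hi
        rcases h i with h1 | ⟨p, hp, hlt⟩
        · left; rw [← hcnt]; exact h1
        · right
          refine bwd _ _ heM (hinc e i _ rfl) ⟨p, hp, lt_of_le_of_lt ?_ hlt⟩
          unfold hrank; cases i <;> simp
    · refine and_congr_right fun hloop => ?_
      set v := (ends e).1 with hv
      have hev : 0 < icount ends e v := by simp [icount, hv]
      rw [hcnt]
      refine or_congr Iff.rfl (or_congr (and_congr_right fun _ => ?_) ?_)
      · constructor
        · intro hex
          obtain ⟨p, hp, hlt⟩ := fwd v e hex
          refine ⟨p, hp, Or.inl (lt_of_le_of_lt ?_ hlt)⟩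
          unfold hrank; simp
        · rintro ⟨p, hp, hlt | hlt⟩
          · refine bwd v e heM hev ⟨p, hp, lt_of_le_of_lt ?_ hlt⟩
            unfold hrank; simp
          · refine bwd v e heM hev ⟨p, hp, lt_of_le_of_lt ?_ hlt⟩
            unfold hrank; simp
      · constructor
        · rintro (⟨f, hfM, hf1, hf2, hr⟩ | ⟨f, hfM, g, hgM, hfg, hfi, hgi, hrf, hrg⟩)
          · refine ⟨(f, false), (f, true), by simp, (hNsome _ v).2 ⟨hfM, hf1⟩,
              (hNsome _ v).2 ⟨hfM, by simpa [endOf] using hf2⟩, ?_, ?_⟩ <;>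
              (unfold hrank; simp; omega)
          · obtain ⟨jf, hjf⟩ := pick f v hfi
            obtain ⟨jg, hjg⟩ := pick g v hgi
            refine ⟨(f, jf), (g, jg), fun h => hfg (congrArg Prod.fst h),
              (hNsome _ v).2 ⟨hfM, hjf⟩, (hNsome _ v).2 ⟨hgM, hjg⟩, ?_, ?_⟩ <;>
              (unfold hrank; cases jf <;> cases jg <;> simp <;> omega)
        · rintro ⟨⟨f, jf⟩, ⟨g, jg⟩, hpq, hpv, hqv, hl1, hl2⟩
          obtain ⟨hfM, hfv⟩ := (hNsome _ v).1 hpv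
          obtain ⟨hgM, hgv⟩ := (hNsome _ v).1 hqv
          by_cases hfg : f = g
          · subst hfg
            have hj : jf ≠ jg := fun h => hpq (by rw [h])
            have hboth : (ends f).1 = v ∧ (ends f).2 = v := by
              cases jf <;> cases jg
              · exact absurd rfl hj
              · exact ⟨by simpa [endOf] using hfv, by simpa [endOf] using hgv⟩
              · exact ⟨by simpa [endOf] using hgv, by simpa [endOf] using hfv⟩
              · exact absurd rfl hj
            refine Or.inl ⟨f, hfM, hboth.1, hboth.2, rlt v e f heM hev hfM
              (hinc f jf v hfv) ?_⟩
            unfold hrank at hl2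
            cases jg <;> simp at hl2 <;> omega
          · have hfi := hinc f jf v hfv
            have hgi := hinc g jg v hgv
            refine Or.inr ⟨f, hfM, g, hgM, hfg, hfi, hgi,
              rlt v e f heM hev hfM hfi ?_, rlt v e g heM hev hgM hgi ?_⟩
            · unfold hrank at hl1
              cases jf <;> simp at hl1 <;> omega
            · unfold hrank at hl2
              cases jg <;> simp at hl2 <;> omega
  exact forall_congr' fun e => not_congr (key e)

end Stmt17
end

section
/- If an HRC instance is a dual market (hospitals partition into H₁, H₂ such that every couple's acceptable pairs have first coordinate in H₁ and second in H₂, and every single doctor applies within only one of H₁, H₂), then the stable-fixtures graph produced by the reduction of Theorem 3.1 (with connector nodes a, b for connected couples) is bipartite. -/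
namespace Stmt19

/-- Nodes of the stable-fixtures graph produced by the reduction: single doctors,
couple members (`mem c false` = first member, `mem c true` = second member), hospitals,
and connector nodes `a`, `b` for connected couples. -/
inductive Node (Ds Cp Hh : Type) : Type
  | doc : Ds → Node Ds Cp Hh
  | mem : Cp → Bool → Node Ds Cp Hh
  | hos : Hh → Node Ds Cp Hh
  | conA : Cp → Bool → Node Ds Cp Hh
  | conB : Cp → Bool → Node Ds Cp Hh

/-- Adjacency in the reduction graph: doctor–hospital edges given by acceptability,
the six connector edges (c₁,a₁),(a₁,b₁),(b₁,c₂),(c₂,a₂),(a₂,b₂),(b₂,c₁) for each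
connected couple, and the edge (c₁,c₂) for half-separable couples; symmetrised. -/
inductive Adj {Ds Cp Hh : Type} (accS : Ds → Hh → Prop) (accM : Cp → Bool → Hh → Prop)
    (connected halfSep : Cp → Prop) : Node Ds Cp Hh → Node Ds Cp Hh → Prop
  | sd {d h} : accS d h → Adj accS accM connected halfSep (.doc d) (.hos h)
  | md {c i h} : accM c i h → Adj accS accM connected halfSep (.mem c i) (.hos h)
  | ca {c i} : connected c → Adj accS accM connected halfSep (.mem c i) (.conA c i)
  | ab {c i} : connected c → Adj accS accM connected halfSep (.conA c i) (.conB c i)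
  | bc {c i} : connected c → Adj accS accM connected halfSep (.conB c i) (.mem c (!i))
  | hs {c} : halfSep c → Adj accS accM connected halfSep (.mem c false) (.mem c true)
  | symm {x y} : Adj accS accM connected halfSep x y → Adj accS accM connected halfSep y x

/-- if the HRC instance is a dual market (first members of couples apply
only to H₁, second members only to H₂, and each single doctor applies within only one of
H₁, H₂), then the reduction graph is bipartite. -/
theorem stmt_19 {Ds Cp Hh : Type}
    (accS : Ds → Hh → Prop) (accM : Cp → Bool → Hh → Prop)
    (connected halfSep : Cp → Prop)
    (inH1 : Hh → Prop)
    -- dual market conditions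
    (hdm1 : ∀ c h, accM c false h → inH1 h)
    (hdm2 : ∀ c h, accM c true h → ¬ inH1 h)
    (hdmS : ∀ d h h', accS d h → accS d h' → (inH1 h ↔ inH1 h')) :
    ∃ p : Node Ds Cp Hh → Bool,
      ∀ x y, Adj accS accM connected halfSep x y → p x ≠ p y := by
  classical
  refine ⟨fun n => match n with
    | .doc d => decide (¬ ∃ h, accS d h ∧ inH1 h)
    | .mem _ i => i
    | .hos h => decide (inH1 h)
    | .conA _ i => !i
    | .conB _ i => i, ?_⟩
  intro x y hxy
  induction hxy with
  | sd hd =>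
    rename_i d h
    simp only [ne_eq, decide_eq_decide]
    intro he
    by_cases h1 : inH1 h
    · exact (he.mpr h1) ⟨h, hd, h1⟩
    · rcases not_not.mp (fun hn => h1 (he.mp hn)) with ⟨h', hd', h1'⟩
      exact h1 ((hdmS d h h' hd hd').mpr h1')
  | md hm =>
    rename_i c i h
    cases i with
    | false => simp [hdm1 c h hm]
    | true => simp [hdm2 c h hm]
  | ca _ => simp
  | ab _ => simp
  | bc _ => simp
  | hs _ => simp
  | symm _ ih => exact fun he => ih he.symm

end Stmt19
end
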